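/- arXiv:1002.0787 — 10 statements merged into one kernel-verified Lean document; each statement's English description precedes it below -/
import Mathlib

section
/- Let n ≥ 1, let P be any n×n complex matrix, and let f, g ∈ ℂ. Let A be the 2×2 matrix [[0,1],[0,0]] and K the 2×2 matrix [[0,0],[f,g]], and set M = I_n ⊗ A + P ⊗ K (Kronecker products, a 2n×2n complex matrix). Then the spectrum of M equals the set of all ν ∈ ℂ such that ν² − λ·g·ν − λ·f = 0 for some eigenvalue λ of P; equivalently, the eigenvalues of M are exactly the numbers ν_{λ,±} = (λg ± √((λg)² + 4λf))/2 as λ runs through the spectrum of P. -/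
/-!
Reorder the coordinates of `ℂⁿ ⊗ ℂ²` so that `ν - M` becomes the block matrix
`[[ν, -1], [-f P, ν - g P]]`. Its blocks are polynomials in `P`, and clearing the `-1` block by
row and column operations gives `det (ν - M) = det (ν² - (ν g + f) P)`. Over an algebraically
closed field this vanishes exactly when `ν² = λ (ν g + f)` for some eigenvalue `λ` of `P`; when
`ν g + f = 0` this uses that a nonempty matrix has an eigenvalue.
-/

open Kronecker

namespace Matrix

variable {m R K : Type*} [DecidableEq m]

theorem mem_spectrum_iff_det_eq_zero [Fintype m] [Field K] (A : Matrix m m K) (r : K) :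
    r ∈ spectrum K A ↔ (r • 1 - A).det = 0 := by
  rw [spectrum.mem_iff, Algebra.algebraMap_eq_smul_one, isUnit_iff_isUnit_det, isUnit_iff_ne_zero,
    not_not]

theorem det_fromBlocks_neg_one₁₂ [Fintype m] [CommRing R] (A C D : Matrix m m R) :
    (fromBlocks A (-1) C D).det = (C + D * A).det := by
  -- apart from the diagonal factor these are unitriangular; the last three give `fromBlocks 0 (-1) 1 0`
  have hfactor : fromBlocks A (-1) C D =
      fromBlocks 1 0 (-D) 1 * fromBlocks 1 0 0 (C + D * A) * fromBlocks 1 A 0 1 *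
        (fromBlocks 1 (-1) 0 1 * fromBlocks 1 0 1 1 * fromBlocks 1 (-1) 0 1) := by
    simp [fromBlocks_multiply]
  rw [hfactor]
  simp [det_fromBlocks_zero₂₁]

theorem det_smul_one_sub_smul_eq_zero_iff [Fintype m] [Field K] [IsAlgClosed K]
    (P : Matrix m m K) (a c : K) :
    (a • 1 - c • P).det = 0 ↔ ∃ lam ∈ spectrum K P, a = lam * c := by
  rcases isEmpty_or_nonempty m with hm | hm
  · simp [spectrum.of_subsingleton]
  by_cases hc : c = 0
  · obtain ⟨lam, hlam⟩ := spectrum.nonempty_of_isAlgClosed_of_finiteDimensional K P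
    simp only [hc, zero_smul, sub_zero, det_smul, det_one, mul_one, mul_zero,
      pow_eq_zero_iff Fintype.card_ne_zero]
    exact ⟨fun ha => ⟨lam, hlam, ha⟩, fun ⟨_, _, ha⟩ => ha⟩
  · have hfactor : a • (1 : Matrix m m K) - c • P = c • ((a / c) • 1 - P) := by
      rw [smul_sub, smul_smul, mul_div_cancel₀ _ hc]
    rw [hfactor, det_smul, mul_eq_zero, ← mem_spectrum_iff_det_eq_zero]
    simp only [pow_eq_zero_iff Fintype.card_ne_zero, hc, false_or]
    exact ⟨fun h => ⟨_, h, (div_mul_cancel₀ a hc).symm⟩,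
      fun ⟨lam, hlam, ha⟩ => by rwa [ha, mul_div_cancel_right₀ _ hc]⟩

def sumSelfEquivProdFinTwo (m : Type*) : m ⊕ m ≃ m × Fin 2 where
  toFun := Sum.elim (·, 0) (·, 1)
  invFun p := if p.2 = 0 then .inl p.1 else .inr p.1
  left_inv := by rintro (i | i) <;> simp
  right_inv := by rintro ⟨i, k⟩; fin_cases k <;> simp

def kroneckerCompanion [CommRing R] (P : Matrix m m R) (f g : R) :
    Matrix (m × Fin 2) (m × Fin 2) R :=
  1 ⊗ₖ !![0, 1; 0, 0] + P ⊗ₖ !![0, 0; f, g]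

theorem submatrix_smul_one_sub_kroneckerCompanion [CommRing R] (P : Matrix m m R) (f g ν : R) :
    (ν • 1 - kroneckerCompanion P f g).submatrix (sumSelfEquivProdFinTwo m)
        (sumSelfEquivProdFinTwo m) =
      fromBlocks (ν • 1) (-1) (-(f • P)) (ν • 1 - g • P) := by
  ext (i | i) (j | j) <;>
    simp [kroneckerCompanion, sumSelfEquivProdFinTwo, one_apply, mul_comm]

theorem det_smul_one_sub_kroneckerCompanion [Fintype m] [CommRing R] (P : Matrix m m R)
    (f g ν : R) :
    (ν • 1 - kroneckerCompanion P f g).det = (ν ^ 2 • 1 - (ν * g + f) • P).det := by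
  rw [← det_submatrix_equiv_self (sumSelfEquivProdFinTwo m),
    submatrix_smul_one_sub_kroneckerCompanion, det_fromBlocks_neg_one₁₂]
  congr 1
  simp only [Matrix.sub_mul, smul_mul_smul_comm, Matrix.mul_one]
  module

theorem spectrum_kroneckerCompanion [Fintype m] [Field K] [IsAlgClosed K] (P : Matrix m m K)
    (f g : K) :
    spectrum K (kroneckerCompanion P f g) =
      {ν | ∃ lam ∈ spectrum K P, ν ^ 2 = lam * (ν * g + f)} := by
  ext ν
  rw [mem_spectrum_iff_det_eq_zero, det_smul_one_sub_kroneckerCompanion,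
    det_smul_one_sub_smul_eq_zero_iff, Set.mem_ofPred_eq]

end Matrix

theorem stmt_2_general (n : ℕ) (P : Matrix (Fin n) (Fin n) ℂ) (f g : ℂ) :
    spectrum ℂ
        ((1 : Matrix (Fin n) (Fin n) ℂ) ⊗ₖ (!![0, 1; 0, 0] : Matrix (Fin 2) (Fin 2) ℂ) +
          P ⊗ₖ (!![0, 0; f, g] : Matrix (Fin 2) (Fin 2) ℂ)) =
      {ν : ℂ | ∃ lam ∈ spectrum ℂ P, ν ^ 2 - lam * g * ν - lam * f = 0} := by
  change spectrum ℂ (Matrix.kroneckerCompanion P f g) = _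
  rw [Matrix.spectrum_kroneckerCompanion]
  ext ν
  refine exists_congr fun lam => and_congr_right fun _ => ?_
  constructor <;> intro h <;> linear_combination h

theorem stmt_2 (n : ℕ) (hn : 1 ≤ n) (P : Matrix (Fin n) (Fin n) ℂ) (f g : ℂ) :
    spectrum ℂ
        ((1 : Matrix (Fin n) (Fin n) ℂ) ⊗ₖ (!![0, 1; 0, 0] : Matrix (Fin 2) (Fin 2) ℂ) +
          P ⊗ₖ (!![0, 0; f, g] : Matrix (Fin 2) (Fin 2) ℂ)) =
      {ν : ℂ | ∃ lam ∈ spectrum ℂ P, ν ^ 2 - lam * g * ν - lam * f = 0} :=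
  stmt_2_general n P f g
end

section
/- Let N ≥ 1 be an integer and ρ ∈ [0,1] a real number. Then every eigenvalue of the N×N complex matrix P = I − Q_ρ is a real number lying in the closed interval [0,2] (explicitly, the eigenvalues are 1 − 2√(ρ(1−ρ))·cos(ℓπ/(N+1)) for ℓ = 1,…,N, which are real and lie in [0,2]). -/
/-- The `N × N` complex tridiagonal matrix with superdiagonal entries `ρ` and
subdiagonal entries `1 - ρ`. -/
def Qmat (N : ℕ) (ρ : ℝ) : Matrix (Fin N) (Fin N) ℂ :=
  Matrix.of fun i j =>
    if (j : ℕ) = (i : ℕ) + 1 then (ρ : ℂ)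
    else if (i : ℕ) = (j : ℕ) + 1 then ((1 - ρ : ℝ) : ℂ) else 0

/-- The reduced graph Laplacian `P = I - Q_ρ`. -/
def Pmat (N : ℕ) (ρ : ℝ) : Matrix (Fin N) (Fin N) ℂ :=
  1 - Qmat N ρ

/-!
For `0 < ρ < 1` the eigenvectors of `Q_ρ` are found by separation of variables: with
`t = √(ρ(1-ρ)) / ρ`, the sequence `w k = t^k sin (k θ)` satisfies the three-term recurrence
`ρ w (k+2) + (1-ρ) w k = 2 √(ρ(1-ρ)) cos θ · w (k+1)` of `Q_ρ`, and the boundary conditions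
`w 0 = w (N+1) = 0` hold for `θ = ℓπ/(N+1)`. This gives `N` distinct eigenvalues, hence all of
them. For `ρ ∈ {0, 1}` the matrix is strictly triangular, so its only eigenvalue is `0`, which is
also the value of the formula. The bounds come from `2√(ρ(1-ρ)) ≤ 1`.
-/

open Matrix Polynomial Real

namespace Matrix

variable {n K : Type*} [Fintype n] [DecidableEq n] [Field K]

theorem mem_spectrum_of_mulVec_eq_smul {M : Matrix n n K} {v : n → K} {μ : K} (hv : v ≠ 0)
    (h : M *ᵥ v = μ • v) : μ ∈ spectrum K M := by
  rw [← spectrum_toLin']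
  exact (Module.End.hasEigenvalue_of_hasEigenvector
    ⟨Module.End.mem_eigenspace_iff.2 (by simpa using h), hv⟩).mem_spectrum

theorem spectrum_subset_of_card_le {M : Matrix n n K} {S : Finset K}
    (hS : (S : Set K) ⊆ spectrum K M) (hcard : Fintype.card n ≤ S.card) :
    spectrum K M ⊆ S := by
  classical
  have hroots : spectrum K M = M.charpoly.roots.toFinset := by
    ext μ
    simp [mem_spectrum_iff_isRoot_charpoly, M.charpoly_monic.ne_zero]
  rw [hroots, Finset.coe_subset] at hS ⊢
  refine (Finset.eq_of_subset_of_card_le hS (le_trans ?_ hcard)).ge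
  calc M.charpoly.roots.toFinset.card ≤ Multiset.card M.charpoly.roots :=
        Multiset.toFinset_card_le _
    _ ≤ M.charpoly.natDegree := card_roots' _
    _ = Fintype.card n := charpoly_natDegree_eq_dim M

theorem spectrum_transpose (M : Matrix n n K) : spectrum K Mᵀ = spectrum K M := by
  ext μ
  simp [mem_spectrum_iff_isRoot_charpoly, charpoly_transpose]

theorem spectrum_subset_zero_of_isUpperTriangular [LinearOrder n] {M : Matrix n n K}
    (h : M.IsUpperTriangular) (hdiag : ∀ i, M i i = 0) : spectrum K M ⊆ {0} := by
  intro μ hμ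
  rw [mem_spectrum_iff_isRoot_charpoly, charpoly_of_isUpperTriangular M h] at hμ
  simp only [hdiag, map_zero, sub_zero, Finset.prod_const, Finset.card_univ, IsRoot.def,
    eval_pow, eval_X] at hμ
  exact pow_eq_zero_iff'.mp hμ |>.1

end Matrix

theorem geom_mul_sin_recurrence {a b t θ : ℝ} (ht : a * t ^ 2 = b) (k : ℕ) :
    a * (t ^ (k + 2) * sin ((k + 2 : ℕ) * θ)) + b * (t ^ k * sin (k * θ)) =
      2 * (a * t) * cos θ * (t ^ (k + 1) * sin ((k + 1 : ℕ) * θ)) := by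
  have hsum : sin ((k + 2 : ℕ) * θ) + sin (k * θ) = 2 * sin ((k + 1 : ℕ) * θ) * cos θ := by
    rw [show ((k + 2 : ℕ) : ℝ) * θ = (k + 1 : ℕ) * θ + θ by push_cast; ring,
      show (k : ℝ) * θ = (k + 1 : ℕ) * θ - θ by push_cast; ring, sin_add, sin_sub]
    ring
  rw [← ht]
  linear_combination a * t ^ (k + 2) * hsum

theorem mul_pi_div_mem_Ioo {N ℓ : ℕ} (hℓ1 : 1 ≤ ℓ) (hℓN : ℓ ≤ N) :
    ℓ * π / (N + 1) ∈ Set.Ioo 0 π := by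
  have hℓ : (ℓ : ℝ) < N + 1 := by exact_mod_cast Nat.lt_succ_of_le hℓN
  refine ⟨by positivity, ?_⟩
  rw [div_lt_iff₀ (by positivity)]
  nlinarith [pi_pos]

theorem cos_mul_pi_div_injOn (N : ℕ) :
    Set.InjOn (fun ℓ : ℕ => cos (ℓ * π / (N + 1))) (Set.Icc 1 N) := by
  intro a ⟨ha1, haN⟩ b ⟨hb1, hbN⟩ hab
  have h := injOn_cos (Set.Ioo_subset_Icc_self (mul_pi_div_mem_Ioo ha1 haN))
    (Set.Ioo_subset_Icc_self (mul_pi_div_mem_Ioo hb1 hbN)) hab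
  field_simp at h
  exact_mod_cast h

theorem abs_two_sqrt_mul_one_sub_mul_cos_le_one (ρ x : ℝ) :
    |2 * √(ρ * (1 - ρ)) * cos x| ≤ 1 := by
  have hsqrt : 2 * √(ρ * (1 - ρ)) ≤ 1 := by
    rw [← le_div_iff₀' two_pos, sqrt_le_left (by norm_num)]
    nlinarith [sq_nonneg (ρ - 1 / 2)]
  rw [abs_mul, abs_of_nonneg (by positivity)]
  exact (mul_le_one₀ hsqrt (abs_nonneg _) (abs_cos_le_one x))

theorem Qmat_apply_self (N : ℕ) (ρ : ℝ) (i : Fin N) : Qmat N ρ i i = 0 := by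
  simp [Qmat]

theorem Qmat_transpose (N : ℕ) (ρ : ℝ) : (Qmat N ρ)ᵀ = Qmat N (1 - ρ) := by
  ext i j
  simp only [Qmat, transpose_apply, of_apply, sub_sub_cancel]
  split_ifs <;> first | omega | rfl

theorem Qmat_one_isUpperTriangular (N : ℕ) : (Qmat N 1).IsUpperTriangular := by
  intro i j hij
  have : (j : ℕ) < i := hij
  simp only [Qmat, of_apply, sub_self, Complex.ofReal_zero]
  split_ifs <;> first | omega | rfl

theorem mem_spectrum_Pmat_iff {N : ℕ} {ρ : ℝ} {μ : ℂ} :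
    μ ∈ spectrum ℂ (Pmat N ρ) ↔ 1 - μ ∈ spectrum ℂ (Qmat N ρ) := by
  rw [Pmat, ← map_one (algebraMap ℂ _), ← spectrum.singleton_sub_eq]
  rw [Set.singleton_sub, Set.mem_image]
  exact ⟨fun ⟨q, hq, hμ⟩ => by rwa [← hμ, sub_sub_cancel],
    fun h => ⟨1 - μ, h, sub_sub_cancel 1 μ⟩⟩

theorem Qmat_mulVec_apply {N : ℕ} {ρ : ℝ} {w : ℕ → ℂ} (h0 : w 0 = 0) (hN : w (N + 1) = 0)
    (k : Fin N) :
    (Qmat N ρ *ᵥ fun i => w (i + 1)) k = ρ * w (k + 2) + (1 - ρ) * w k := by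
  simp only [mulVec, dotProduct, Qmat, of_apply]
  rw [Fin.sum_univ_eq_sum_range (fun j => (if j = (k : ℕ) + 1 then (ρ : ℂ)
    else if (k : ℕ) = j + 1 then ((1 - ρ : ℝ) : ℂ) else 0) * w (j + 1))]
  have hsplit : ∀ j : ℕ, (if j = (k : ℕ) + 1 then (ρ : ℂ)
      else if (k : ℕ) = j + 1 then ((1 - ρ : ℝ) : ℂ) else 0) * w (j + 1) =
      (if j = (k : ℕ) + 1 then (ρ : ℂ) * w (k + 2) else 0) +
      (if j + 1 = k then (1 - ρ) * w k else 0) := by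
    intro j
    by_cases h1 : j = (k : ℕ) + 1
    · rw [if_pos h1, if_pos h1, if_neg (by omega), h1]
      ring
    by_cases h2 : j + 1 = k
    · rw [if_neg h1, if_pos h2.symm, if_neg h1, if_pos h2, h2]
      push_cast
      ring
    · rw [if_neg h1, if_neg (Ne.symm h2), if_neg h1, if_neg h2]
      simp
  simp only [hsplit, Finset.sum_add_distrib, Finset.sum_ite_eq', Finset.mem_range]
  have hsuper : (if (k : ℕ) + 1 < N then (ρ : ℂ) * w (k + 2) else 0) = ρ * w (k + 2) := by
    split_ifs with h
    · rfl
    · rw [show (k : ℕ) + 2 = N + 1 by omega, hN, mul_zero]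
  have hsub : ∑ j ∈ Finset.range N, (if j + 1 = (k : ℕ) then (1 - (ρ : ℂ)) * w k else 0) =
      (1 - ρ) * w k := by
    obtain ⟨_ | m, hm⟩ := k
    · simp [h0]
    · simp [Finset.sum_ite_eq', show m < N by omega]
  rw [hsuper, hsub]

theorem Qmat_mulVec_eq_smul {N : ℕ} {ρ : ℝ} {z : ℂ} {w : ℕ → ℂ} (h0 : w 0 = 0)
    (hN : w (N + 1) = 0) (hrec : ∀ k, ρ * w (k + 2) + (1 - ρ) * w k = z * w (k + 1)) :
    Qmat N ρ *ᵥ (fun i => w (i + 1)) = z • fun i : Fin N => w (i + 1) := by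
  ext k
  rw [Qmat_mulVec_apply h0 hN, hrec]
  rfl

noncomputable def Qmat.eigenvalue (N : ℕ) (ρ : ℝ) (ℓ : ℕ) : ℝ :=
  2 * √(ρ * (1 - ρ)) * cos (ℓ * π / (N + 1))

theorem Qmat.eigenvalue_mem_spectrum {N ℓ : ℕ} {ρ : ℝ} (hρ : ρ ∈ Set.Ioo 0 1) (hℓ1 : 1 ≤ ℓ)
    (hℓN : ℓ ≤ N) : (Qmat.eigenvalue N ρ ℓ : ℂ) ∈ spectrum ℂ (Qmat N ρ) := by
  set θ : ℝ := ℓ * π / (N + 1) with hθ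
  have hθ_mem : θ ∈ Set.Ioo 0 π := mul_pi_div_mem_Ioo hℓ1 hℓN
  have hvar : 0 < ρ * (1 - ρ) := mul_pos hρ.1 (sub_pos.2 hρ.2)
  set c : ℝ := √(ρ * (1 - ρ))
  set t : ℝ := c / ρ
  have ht : 0 < t := div_pos (sqrt_pos.2 hvar) hρ.1
  have hρt : ρ * t = c := mul_div_cancel₀ c hρ.1.ne'
  have hρt2 : ρ * t ^ 2 = 1 - ρ := by
    rw [pow_two, ← mul_assoc, hρt, mul_div_assoc', mul_self_sqrt hvar.le]
    field_simp [hρ.1.ne']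
  let w : ℕ → ℂ := fun k => ((t ^ k * sin (k * θ) : ℝ) : ℂ)
  have hrec : ∀ k, ρ * w (k + 2) + (1 - ρ) * w k = Qmat.eigenvalue N ρ ℓ * w (k + 1) := by
    intro k
    have h := geom_mul_sin_recurrence (θ := θ) hρt2 k
    rw [hρt] at h
    simp only [w, Qmat.eigenvalue, ← hθ]
    exact_mod_cast h
  have hwN : w (N + 1) = 0 := by
    have : ((N + 1 : ℕ) : ℝ) * θ = ℓ * π := by rw [hθ]; push_cast; field_simp
    simp only [w, this, sin_nat_mul_pi, mul_zero, Complex.ofReal_zero]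
  have hv : (fun i : Fin N => w (i + 1)) ≠ 0 := by
    intro h
    have h1 := congr_fun h ⟨0, by omega⟩
    simp only [w, Nat.cast_one, one_mul, pow_one, Pi.zero_apply, Complex.ofReal_eq_zero,
      zero_add] at h1
    exact (mul_pos ht (sin_pos_of_pos_of_lt_pi hθ_mem.1 hθ_mem.2)).ne' h1
  exact mem_spectrum_of_mulVec_eq_smul hv (Qmat_mulVec_eq_smul (by simp [w]) hwN hrec)

theorem spectrum_Qmat_subset_of_mem_Ioo {N : ℕ} {ρ : ℝ} (hρ : ρ ∈ Set.Ioo 0 1) :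
    spectrum ℂ (Qmat N ρ) ⊆ (fun ℓ => (Qmat.eigenvalue N ρ ℓ : ℂ)) '' Set.Icc 1 N := by
  set f : ℕ → ℂ := fun ℓ => (Qmat.eigenvalue N ρ ℓ : ℂ)
  have hc : 2 * √(ρ * (1 - ρ)) ≠ 0 :=
    mul_ne_zero two_ne_zero (sqrt_pos.2 (mul_pos hρ.1 (sub_pos.2 hρ.2))).ne'
  have hinj : Set.InjOn f (Finset.Icc 1 N) := fun a ha b hb hab =>
    cos_mul_pi_div_injOn N (by simpa using ha) (by simpa using hb)
      (mul_left_cancel₀ hc (Complex.ofReal_injective hab))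
  have hmem : ((Finset.Icc 1 N).image f : Set ℂ) ⊆ spectrum ℂ (Qmat N ρ) := by
    intro _ h
    obtain ⟨ℓ, hℓ, rfl⟩ := Finset.mem_image.1 h
    exact Qmat.eigenvalue_mem_spectrum hρ (Finset.mem_Icc.1 hℓ).1 (Finset.mem_Icc.1 hℓ).2
  have hcard : Fintype.card (Fin N) ≤ ((Finset.Icc 1 N).image f).card := by
    rw [Finset.card_image_of_injOn hinj, Nat.card_Icc, Fintype.card_fin, Nat.add_sub_cancel]
  simpa using Matrix.spectrum_subset_of_card_le hmem hcard

theorem spectrum_Qmat_subset_zero {N : ℕ} {ρ : ℝ} (hρ : ρ = 0 ∨ ρ = 1) :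
    spectrum ℂ (Qmat N ρ) ⊆ {0} := by
  have h1 : spectrum ℂ (Qmat N 1) ⊆ {0} :=
    Matrix.spectrum_subset_zero_of_isUpperTriangular (Qmat_one_isUpperTriangular N)
      (Qmat_apply_self N 1)
  rcases hρ with rfl | rfl
  · rwa [← sub_self (1 : ℝ), ← Qmat_transpose, Matrix.spectrum_transpose]
  · exact h1

theorem spectrum_Qmat_subset {N : ℕ} {ρ : ℝ} (hN : 1 ≤ N) (hρ : ρ ∈ Set.Icc 0 1) :
    spectrum ℂ (Qmat N ρ) ⊆ (fun ℓ => (Qmat.eigenvalue N ρ ℓ : ℂ)) '' Set.Icc 1 N := by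
  by_cases hρ' : ρ ∈ Set.Ioo 0 1
  · exact spectrum_Qmat_subset_of_mem_Ioo hρ'
  have hρ01 : ρ = 0 ∨ ρ = 1 := by
    simp only [Set.mem_Ioo, not_and_or, not_lt] at hρ'
    rcases hρ' with h | h
    · exact .inl (le_antisymm h hρ.1)
    · exact .inr (le_antisymm hρ.2 h)
  have hzero : Qmat.eigenvalue N ρ 1 = 0 := by
    rcases hρ01 with rfl | rfl <;> simp [Qmat.eigenvalue]
  intro z hz
  rw [spectrum_Qmat_subset_zero hρ01 hz]
  exact ⟨1, ⟨le_rfl, hN⟩, by simp [hzero]⟩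

theorem stmt_3 (N : ℕ) (hN : 1 ≤ N) (ρ : ℝ) (hρ : ρ ∈ Set.Icc (0 : ℝ) 1) :
    ∀ μ ∈ spectrum ℂ (Pmat N ρ), ∃ ℓ : ℕ, 1 ≤ ℓ ∧ ℓ ≤ N ∧
      μ = ((1 - 2 * Real.sqrt (ρ * (1 - ρ)) * Real.cos (ℓ * Real.pi / (N + 1)) : ℝ) : ℂ) ∧
      0 ≤ 1 - 2 * Real.sqrt (ρ * (1 - ρ)) * Real.cos (ℓ * Real.pi / (N + 1)) ∧
      1 - 2 * Real.sqrt (ρ * (1 - ρ)) * Real.cos (ℓ * Real.pi / (N + 1)) ≤ 2 := by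
  intro μ hμ
  obtain ⟨ℓ, ⟨hℓ1, hℓN⟩, hℓ : (Qmat.eigenvalue N ρ ℓ : ℂ) = 1 - μ⟩ :=
    spectrum_Qmat_subset hN hρ (mem_spectrum_Pmat_iff.1 hμ)
  have hbound := abs_le.1 (abs_two_sqrt_mul_one_sub_mul_cos_le_one ρ (ℓ * π / (N + 1)))
  refine ⟨ℓ, hℓ1, hℓN, ?_, by linarith [hbound.2], by linarith [hbound.1]⟩
  change μ = ((1 - Qmat.eigenvalue N ρ ℓ : ℝ) : ℂ)
  rw [Complex.ofReal_sub, Complex.ofReal_one, hℓ, sub_sub_cancel]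
end

section
/- Let ρ be a real number with ρ ∉ [0,1], and let f, g be real numbers. Then the following two conditions are equivalent: (A) for every real number a with |a| < 2√(|ρ(1−ρ)|), both complex roots of z² − (1+ia)·g·z − (1+ia)·f = 0 have strictly negative real part; (B) f < 0 and g < 0, and in addition either f + g² ≥ 0 or 4|ρ(1−ρ)| ≤ −g²/(f+g²). (This is the spectral content of asymptotic stability of the flock for arbitrary N, since for ρ ∉ [0,1] the eigenvalues of the reduced Laplacian are 1 + ia with a ranging densely, as N → ∞, over the interval (−2√(|ρ(1−ρ)|), 2√(|ρ(1−ρ)|)).) -/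
/-!
Both roots `r, s` of `z² - Bz - C` have negative real part iff `Re(r + s) < 0` and
`Re r · Re s > 0`; in terms of `B = r + s`, `C = -rs` this is the degree-two Routh–Hurwitz
criterion `Re B < 0`, `(Re B)² Re C + Re B Im B Im C + (Im C)² < 0`. For `B = (1 + ia) g`,
`C = (1 + ia) f` it reads `g < 0`, `f (g² + a² (f + g²)) < 0`, a condition affine in `a²`.
Since `ρ ∉ [0, 1]`, the admissible `a²` fill `[0, 4|ρ(1 - ρ)|)`, so it suffices to check the
endpoints: `a = 0` gives `f < 0`, and the right end gives `g² + 4|ρ(1 - ρ)| (f + g²) ≥ 0`.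
-/

open Complex

theorem re_neg_and_re_neg_iff (r s : ℂ) :
    r.re < 0 ∧ s.re < 0 ↔
      r.re + s.re < 0 ∧ 0 < r.re * s.re * ((r.re + s.re) ^ 2 + (r.im - s.im) ^ 2) := by
  constructor
  · rintro ⟨hr, hs⟩
    have hsum : r.re + s.re < 0 := by linarith
    exact ⟨hsum, mul_pos (mul_pos_of_neg_of_neg hr hs)
      (add_pos_of_pos_of_nonneg (sq_pos_of_neg hsum) (sq_nonneg _))⟩
  · rintro ⟨hsum, hprod⟩
    have hpos : 0 < r.re * s.re := pos_of_mul_pos_left hprod (by positivity)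
    rcases pos_and_pos_or_neg_and_neg_of_mul_pos hpos with ⟨hr, hs⟩ | h
    · linarith
    · exact h

theorem exists_add_eq_and_neg_mul_eq (B C : ℂ) : ∃ r s : ℂ, B = r + s ∧ C = -(r * s) := by
  obtain ⟨w, hw⟩ := IsAlgClosed.exists_pow_nat_eq (B ^ 2 + 4 * C) two_pos
  exact ⟨(B + w) / 2, (B - w) / 2, by ring, by linear_combination -hw / 4⟩

theorem forall_root_re_neg_iff (B C : ℂ) :
    (∀ z : ℂ, z ^ 2 - B * z - C = 0 → z.re < 0) ↔
      B.re < 0 ∧ B.re ^ 2 * C.re + B.re * B.im * C.im + C.im ^ 2 < 0 := by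
  obtain ⟨r, s, rfl, rfl⟩ := exists_add_eq_and_neg_mul_eq B C
  have hfactor : ∀ z : ℂ, z ^ 2 - (r + s) * z - -(r * s) = (z - r) * (z - s) := fun z => by ring
  simp only [hfactor, mul_eq_zero, sub_eq_zero, or_imp, forall_and, forall_eq]
  rw [re_neg_and_re_neg_iff]
  simp only [add_re, add_im, neg_re, neg_im, mul_re, mul_im]
  constructor <;> rintro ⟨hsum, h⟩ <;> exact ⟨hsum, by linarith⟩

theorem forall_root_re_neg_iff_of_one_add_I_mul (a f g : ℝ) :
    (∀ z : ℂ, z ^ 2 - (1 + I * a) * g * z - (1 + I * a) * f = 0 → z.re < 0) ↔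
      g < 0 ∧ f * (g ^ 2 + a ^ 2 * (f + g ^ 2)) < 0 := by
  rw [forall_root_re_neg_iff]
  simp only [add_re, add_im, mul_re, mul_im, one_re, one_im, I_re, I_im, ofReal_re, ofReal_im]
  constructor <;> rintro ⟨hg, h⟩ <;> exact ⟨by linarith, by linarith⟩

theorem forall_sq_lt_pos_add_sq_mul_iff {K c d : ℝ} (hK : 0 < K) :
    (∀ a : ℝ, a ^ 2 < K → 0 < c + a ^ 2 * d) ↔ 0 < c ∧ 0 ≤ c + K * d := by
  constructor
  · intro h
    have hc : 0 < c := by simpa using h 0 (by simpa using hK)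
    refine ⟨hc, ?_⟩
    by_contra! hneg
    have hd : d < 0 := by nlinarith
    -- at `a² = -c / d ∈ (0, K)` the affine function `c + a² d` vanishes
    have hroot : Real.sqrt (-c / d) ^ 2 = -c / d :=
      Real.sq_sqrt (div_nonneg_of_nonpos (by linarith) hd.le)
    have := h (Real.sqrt (-c / d)) (by rw [hroot, div_lt_iff_of_neg hd]; linarith)
    rw [hroot, div_mul_cancel₀ _ hd.ne] at this
    linarith
  · rintro ⟨hc, hK'⟩ a ha
    nlinarith [sq_nonneg a]

theorem nonneg_add_mul_iff {K c d : ℝ} (hK : 0 ≤ K) (hc : 0 ≤ c) :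
    0 ≤ c + K * d ↔ 0 ≤ d ∨ K ≤ -c / d := by
  rcases le_or_gt 0 d with hd | hd
  · exact ⟨fun _ => Or.inl hd, fun _ => by positivity⟩
  · rw [le_div_iff_of_neg hd, or_iff_right hd.not_ge]
    constructor <;> intro h <;> linarith

theorem forall_sq_lt_neg_and_mul_neg_iff {K f g : ℝ} (hK : 0 < K) :
    (∀ a : ℝ, a ^ 2 < K → g < 0 ∧ f * (g ^ 2 + a ^ 2 * (f + g ^ 2)) < 0) ↔
      f < 0 ∧ g < 0 ∧ 0 ≤ g ^ 2 + K * (f + g ^ 2) := by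
  constructor
  · intro h
    obtain ⟨hg, hf0⟩ := h 0 (by simpa using hK)
    have hf : f < 0 := by nlinarith
    have hpos : ∀ a : ℝ, a ^ 2 < K → 0 < g ^ 2 + a ^ 2 * (f + g ^ 2) :=
      fun a ha => pos_of_mul_neg_right (h a ha).2 hf.le
    exact ⟨hf, hg, ((forall_sq_lt_pos_add_sq_mul_iff hK).1 hpos).2⟩
  · rintro ⟨hf, hg, hK'⟩
    have hpos := (forall_sq_lt_pos_add_sq_mul_iff hK).2 ⟨sq_pos_of_neg hg, hK'⟩
    exact fun a ha => ⟨hg, mul_neg_of_neg_of_pos hf (hpos a ha)⟩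

theorem abs_lt_two_mul_sqrt_iff {M : ℝ} (hM : 0 ≤ M) (a : ℝ) :
    |a| < 2 * √M ↔ a ^ 2 < 4 * M := by
  rw [← sq_lt_sq₀ (abs_nonneg a) (by positivity), sq_abs, mul_pow, Real.sq_sqrt hM]
  norm_num

theorem mul_one_sub_neg_of_notMem_Icc {ρ : ℝ} (hρ : ρ ∉ Set.Icc (0 : ℝ) 1) :
    ρ * (1 - ρ) < 0 := by
  rw [Set.mem_Icc, not_and_or, not_le, not_le] at hρ
  rcases hρ with h | h <;> nlinarith

theorem stmt_6 (ρ : ℝ) (hρ : ρ ∉ Set.Icc (0 : ℝ) 1) (f g : ℝ) :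
    (∀ a : ℝ, |a| < 2 * Real.sqrt |ρ * (1 - ρ)| →
        ∀ z : ℂ, z ^ 2 - (1 + Complex.I * a) * g * z - (1 + Complex.I * a) * f = 0 →
          z.re < 0) ↔
      (f < 0 ∧ g < 0 ∧ (f + g ^ 2 ≥ 0 ∨ 4 * |ρ * (1 - ρ)| ≤ -g ^ 2 / (f + g ^ 2))) := by
  have hM : 0 < |ρ * (1 - ρ)| := abs_pos.2 (mul_one_sub_neg_of_notMem_Icc hρ).ne
  simp only [abs_lt_two_mul_sqrt_iff hM.le, forall_root_re_neg_iff_of_one_add_I_mul]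
  rw [forall_sq_lt_neg_and_mul_neg_iff (by positivity),
    nonneg_add_mul_iff (by positivity) (sq_nonneg g)]
end

section
/- Let f and g be negative real numbers. There exist real numbers τ and a such that ν = iτ satisfies ν² − (1+ia)·g·ν − (1+ia)·f = 0 if and only if f + g² < 0; and in that case the only solutions are (τ, a) = (f/√(−f−g²), −g/√(−f−g²)) and (τ, a) = (−f/√(−f−g²), g/√(−f−g²)). -/
/-!
Splitting the equation into real and imaginary parts gives `τ² = a g τ - f` and `a f = -g τ`.
Since `f ≠ 0`, the second equation determines `a = -g τ / f`, and substituting it into the first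
leaves `τ² (-f - g²) = f²`. As `f² > 0`, this is solvable exactly when `-f - g² > 0`, and then
`τ = ±f / √(-f - g²)`, which fixes `a = ∓g / √(-f - g²)`.
-/

lemma I_mul_quadratic_eq_zero_iff (f g τ a : ℝ) :
    (Complex.I * τ) ^ 2 - (1 + Complex.I * a) * g * (Complex.I * τ)
      - (1 + Complex.I * a) * f = 0 ↔
    -τ ^ 2 + a * g * τ - f = 0 ∧ -(g * τ) - a * f = 0 := by
  have hsplit : (Complex.I * τ) ^ 2 - (1 + Complex.I * a) * g * (Complex.I * τ)
      - (1 + Complex.I * a) * f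
      = ((-τ ^ 2 + a * g * τ - f : ℝ) : ℂ) + ((-(g * τ) - a * f : ℝ) : ℂ) * Complex.I := by
    push_cast
    linear_combination (τ ^ 2 - a * g * τ) * Complex.I_sq
  rw [hsplit, ← Complex.mk_eq_add_mul_I, Complex.ext_iff]
  rfl

lemma quadratic_system_iff {K : Type*} [Field K] {f : K} (hf : f ≠ 0) (g τ a : K) :
    (-τ ^ 2 + a * g * τ - f = 0 ∧ -(g * τ) - a * f = 0) ↔
      τ ^ 2 * (-f - g ^ 2) = f ^ 2 ∧ a = -(g * τ) / f := by
  have ha : -(g * τ) - a * f = 0 ↔ a = -(g * τ) / f := by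
    rw [eq_div_iff hf]
    constructor <;> intro h <;> linear_combination -h
  rw [ha]
  constructor
  · rintro ⟨h, rfl⟩
    refine ⟨?_, rfl⟩
    field_simp at h
    linear_combination h
  · rintro ⟨h, rfl⟩
    refine ⟨?_, rfl⟩
    field_simp
    linear_combination h

lemma sq_mul_eq_sq_iff {c : ℝ} (hc : 0 < c) (f τ : ℝ) :
    τ ^ 2 * c = f ^ 2 ↔ τ = f / √c ∨ τ = -f / √c := by
  have hs : 0 < √c := Real.sqrt_pos.mpr hc
  rw [show τ ^ 2 * c = (τ * √c) ^ 2 by rw [mul_pow, Real.sq_sqrt hc.le],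
    sq_eq_sq_iff_eq_or_eq_neg, eq_div_iff hs.ne', eq_div_iff hs.ne']

lemma exists_sq_mul_eq_sq_iff {f : ℝ} (hf : f ≠ 0) (c : ℝ) :
    (∃ τ : ℝ, τ ^ 2 * c = f ^ 2) ↔ 0 < c := by
  refine ⟨fun ⟨τ, hτ⟩ => ?_, fun hc => ⟨f / √c, (sq_mul_eq_sq_iff hc f _).mpr (Or.inl rfl)⟩⟩
  have : 0 < τ ^ 2 * c := hτ ▸ sq_pos_of_ne_zero hf
  exact pos_of_mul_pos_right this (sq_nonneg τ)

theorem stmt_7_general (f g : ℝ) (hf : f < 0) :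
    ((∃ τ a : ℝ,
        (Complex.I * τ) ^ 2 - (1 + Complex.I * a) * g * (Complex.I * τ)
          - (1 + Complex.I * a) * f = 0) ↔ f + g ^ 2 < 0) ∧
    (f + g ^ 2 < 0 →
      ∀ τ a : ℝ,
        ((Complex.I * τ) ^ 2 - (1 + Complex.I * a) * g * (Complex.I * τ)
            - (1 + Complex.I * a) * f = 0 ↔
          ((τ = f / Real.sqrt (-f - g ^ 2) ∧ a = -g / Real.sqrt (-f - g ^ 2)) ∨
            (τ = -f / Real.sqrt (-f - g ^ 2) ∧ a = g / Real.sqrt (-f - g ^ 2))))) := by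
  have hsystem : ∀ τ a : ℝ, _ ↔ τ ^ 2 * (-f - g ^ 2) = f ^ 2 ∧ a = -(g * τ) / f := fun τ a =>
    (I_mul_quadratic_eq_zero_iff f g τ a).trans (quadratic_system_iff hf.ne g τ a)
  refine ⟨?_, fun h τ a => ?_⟩
  · simp only [hsystem, exists_and_left, exists_eq, and_true]
    rw [exists_sq_mul_eq_sq_iff hf.ne]
    constructor <;> intro h <;> linarith
  · have hf0 : f ≠ 0 := hf.ne
    rw [hsystem, sq_mul_eq_sq_iff (by linarith)]
    constructor
    · rintro ⟨rfl | rfl, rfl⟩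
      · exact Or.inl ⟨rfl, by field_simp⟩
      · exact Or.inr ⟨rfl, by field_simp⟩
    · rintro (⟨rfl, rfl⟩ | ⟨rfl, rfl⟩)
      · exact ⟨Or.inl rfl, by field_simp⟩
      · exact ⟨Or.inr rfl, by field_simp⟩

theorem stmt_7 (f g : ℝ) (hf : f < 0) (hg : g < 0) :
    ((∃ τ a : ℝ,
        (Complex.I * τ) ^ 2 - (1 + Complex.I * a) * g * (Complex.I * τ)
          - (1 + Complex.I * a) * f = 0) ↔ f + g ^ 2 < 0) ∧
    (f + g ^ 2 < 0 →
      ∀ τ a : ℝ,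
        ((Complex.I * τ) ^ 2 - (1 + Complex.I * a) * g * (Complex.I * τ)
            - (1 + Complex.I * a) * f = 0 ↔
          ((τ = f / Real.sqrt (-f - g ^ 2) ∧ a = -g / Real.sqrt (-f - g ^ 2)) ∨
            (τ = -f / Real.sqrt (-f - g ^ 2) ∧ a = g / Real.sqrt (-f - g ^ 2))))) :=
  stmt_7_general f g hf
end

section
/- Let f and g be negative real numbers with f + g² < 0. Then there exists A > 0 such that for every real a with a ≥ A, the quadratic equation z² − (1+ia)·g·z − (1+ia)·f = 0 has a complex root z with Re(z) > 0. (Indeed, as a → ∞ one root tends to −f/g, and since the real parts of the two roots sum to g, the other root's real part tends to g + f/g > 0.) -/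
set_option maxHeartbeats 1000000


theorem stmt_8 (f g : ℝ) (hf : f < 0) (hg : g < 0) (hfg : f + g ^ 2 < 0) :
    ∃ A : ℝ, 0 < A ∧ ∀ a : ℝ, A ≤ a →
      ∃ z : ℂ, z ^ 2 - (1 + Complex.I * a) * g * z - (1 + Complex.I * a) * f = 0 ∧
        0 < z.re := by
  have hfg' : (0:ℝ) < -(f + g ^ 2) := by linarith
  refine ⟨1 + g ^ 2 / (-(f + g ^ 2)), by positivity, ?_⟩
  intro a ha
  have hq : 0 ≤ g ^ 2 / (-(f + g ^ 2)) := by positivity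
  have ha1 : (1:ℝ) ≤ a := by linarith
  have hA : g ^ 2 / (-(f + g ^ 2)) < a := by linarith
  have key : g ^ 2 < a ^ 2 * (-(f + g ^ 2)) := by
    rw [div_lt_iff₀ hfg'] at hA
    nlinarith
  set w : ℂ := 1 + Complex.I * a with hw
  obtain ⟨s, hs⟩ := Complex.isAlgClosed.exists_pow_nat_eq
    (w * (w * (g : ℂ) ^ 2 + 4 * (f : ℂ))) (n := 2) (by norm_num)
  have hre : (w * (w * (g : ℂ) ^ 2 + 4 * (f : ℂ))).re = g ^ 2 + 4 * f - a ^ 2 * g ^ 2 := by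
    simp [hw, Complex.mul_re, Complex.mul_im, Complex.add_re, Complex.add_im,
      ← Complex.ofReal_pow]
    ring
  have him : (w * (w * (g : ℂ) ^ 2 + 4 * (f : ℂ))).im = a * (2 * g ^ 2 + 4 * f) := by
    simp [hw, Complex.mul_re, Complex.mul_im, Complex.add_re, Complex.add_im,
      ← Complex.ofReal_pow]
    ring
  have h1 : s.re ^ 2 - s.im ^ 2 = g ^ 2 + 4 * f - a ^ 2 * g ^ 2 := by
    have h := congrArg Complex.re hs
    rw [hre] at h
    simp only [pow_two, Complex.mul_re] at h
    nlinarith [h]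
  have h2 : 2 * (s.re * s.im) = a * (2 * g ^ 2 + 4 * f) := by
    have h := congrArg Complex.im hs
    rw [him] at h
    simp only [pow_two, Complex.mul_im] at h
    linarith
  have hxim : s.re ^ 2 * s.im ^ 2 = a ^ 2 * (g ^ 2 + 2 * f) ^ 2 := by
    have h2' : (2 * (s.re * s.im)) ^ 2 = (a * (2 * g ^ 2 + 4 * f)) ^ 2 := by rw [h2]
    nlinarith [h2']
  have hkey2 : g ^ 2 * (a ^ 2 * g ^ 2 - 4 * f) < a ^ 2 * (g ^ 2 + 2 * f) ^ 2 := by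
    have h4 : (0:ℝ) < (-4 * f) * (a ^ 2 * (-(f + g ^ 2)) - g ^ 2) :=
      mul_pos (by linarith) (by linarith)
    nlinarith [h4]
  -- show s.re ^ 2 > g ^ 2
  have hx : g ^ 2 < s.re ^ 2 := by
    by_contra hcon
    push_neg at hcon
    have hy : s.im ^ 2 = s.re ^ 2 - (g ^ 2 + 4 * f - a ^ 2 * g ^ 2) := by linarith
    have hyb : s.im ^ 2 ≤ a ^ 2 * g ^ 2 - 4 * f := by nlinarith [hy, hcon]
    have : s.re ^ 2 * s.im ^ 2 ≤ g ^ 2 * (a ^ 2 * g ^ 2 - 4 * f) :=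
      mul_le_mul hcon hyb (sq_nonneg _) (sq_nonneg _)
    linarith [hxim, hkey2]
  have hwre : ∀ t : ℂ, ((w * (g : ℂ) + t) / 2).re = (g + t.re) / 2 := by
    intro t
    simp [hw, Complex.div_re, Complex.add_re, Complex.mul_re, Complex.normSq]
  rcases le_or_gt 0 s.re with hsr | hsr
  · refine ⟨(w * (g : ℂ) + s) / 2, by linear_combination hs / 4, ?_⟩
    rw [hwre s]
    have : -g < s.re := by nlinarith
    linarith
  · refine ⟨(w * (g : ℂ) + (-s)) / 2, by linear_combination hs / 4, ?_⟩
    rw [hwre (-s)]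
    have hns : -g < -s.re := by nlinarith
    have : (-s).re = -s.re := Complex.neg_re s
    rw [this]
    linarith
end

section
/- Let N ≥ 1 be an integer, ρ a nonzero real number, κ = (1−ρ)/ρ, and γ ∈ ℂ. Let μ₊, μ₋ ∈ ℂ be the two roots of ρx² − γx + (1−ρ) = 0 (so μ₊ + μ₋ = γ/ρ and μ₊·μ₋ = κ), and assume μ₊^{N+1} ≠ μ₋^{N+1}. If a₀, a₁, …, a_{N+1} are complex numbers satisfying (1−ρ)·a_{k−1} − γ·a_k + ρ·a_{k+1} = 0 for all k = 1,…,N, with boundary conditions a₀ = a_{N+1} = 1, then for every k = 0,…,N+1, a_k = (κ^k·(μ₊^{N+1−k} − μ₋^{N+1−k}) + (μ₊^k − μ₋^k)) / (μ₊^{N+1} − μ₋^{N+1}). -/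
theorem stmt_9 (N : ℕ) (hN : 1 ≤ N) (ρ : ℝ) (hρ : ρ ≠ 0) (γ : ℂ) (μp μm : ℂ)
    (hroots : ∀ x : ℂ, (ρ : ℂ) * x ^ 2 - γ * x + (1 - (ρ : ℂ))
      = (ρ : ℂ) * (x - μp) * (x - μm))
    (hne : μp ^ (N + 1) ≠ μm ^ (N + 1))
    (a : ℕ → ℂ)
    (hrec : ∀ k : ℕ, 1 ≤ k → k ≤ N →
      (1 - (ρ : ℂ)) * a (k - 1) - γ * a k + (ρ : ℂ) * a (k + 1) = 0)
    (h0 : a 0 = 1) (hN1 : a (N + 1) = 1) :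
    ∀ k : ℕ, k ≤ N + 1 →
      a k = ((((1 - ρ) / ρ : ℝ) : ℂ) ^ k * (μp ^ (N + 1 - k) - μm ^ (N + 1 - k))
              + (μp ^ k - μm ^ k)) / (μp ^ (N + 1) - μm ^ (N + 1)) := by
  have hρ' : (ρ : ℂ) ≠ 0 := by exact_mod_cast hρ
  have hκ : (1 - (ρ : ℂ)) = (ρ : ℂ) * (μp * μm) := by linear_combination hroots 0
  have hγ : γ = (ρ : ℂ) * (μp + μm) := by linear_combination hroots 0 - hroots 1
  have hμ : μp ≠ μm := by
    intro h; exact hne (by rw [h])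
  have hμμ : μp - μm ≠ 0 := sub_ne_zero.mpr hμ
  have hD : μp ^ (N + 1) - μm ^ (N + 1) ≠ 0 := sub_ne_zero.mpr hne
  -- key: every solution value is affine in a 1
  have key : ∀ k, k ≤ N + 1 →
      (ρ : ℂ) * (μp - μm) * a k
        = (ρ : ℂ) * ((μp * μm ^ k - μm * μp ^ k) + a 1 * (μp ^ k - μm ^ k)) := by
    intro k
    induction k using Nat.strong_induction_on with
    | _ k ih =>
      rcases k with _ | _ | j
      · intro _; rw [h0]; ring
      · intro _; ring
      · intro hk
        have H := hrec (j + 1) (by omega) (by omega)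
        rw [hγ, hκ] at H
        simp only [Nat.add_sub_cancel] at H
        have P0 := ih j (by omega) (by omega)
        have P1 := ih (j + 1) (by omega) (by omega)
        linear_combination (μp - μm) * H + (μp + μm) * P1 - μp * μm * P0
  -- determine a 1
  have E := key (N + 1) le_rfl
  rw [hN1] at E
  have ha1 : (ρ : ℂ) * (a 1 * (μp ^ (N + 1) - μm ^ (N + 1)))
      = (ρ : ℂ) * ((μp - μm) - μp * μm ^ (N + 1) + μm * μp ^ (N + 1)) := by
    linear_combination -E
  have hA : a 1 * (μp ^ (N + 1) - μm ^ (N + 1))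
      = (μp - μm) - μp * μm ^ (N + 1) + μm * μp ^ (N + 1) :=
    mul_left_cancel₀ hρ' ha1
  -- conclusion
  intro k hk
  obtain ⟨j, hj⟩ := Nat.exists_eq_add_of_le hk
  have hsub : N + 1 - k = j := by omega
  have hκ2 : ((1 - (ρ : ℂ)) / (ρ : ℂ)) = μp * μm := by
    field_simp
    linear_combination hκ
  have hD' : μp ^ (k + j) - μm ^ (k + j) ≠ 0 := by rw [← hj]; exact hD
  have Pk := key k hk
  rw [hj] at hA
  rw [hsub, hj]
  push_cast
  rw [hκ2, eq_div_iff hD']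
  have G : (ρ : ℂ) * (μp - μm) * (a k * (μp ^ (k + j) - μm ^ (k + j)))
      = (ρ : ℂ) * (μp - μm) *
        ((μp * μm) ^ k * (μp ^ j - μm ^ j) + (μp ^ k - μm ^ k)) := by
    linear_combination (μp ^ (k + j) - μm ^ (k + j)) * Pk
      + (ρ : ℂ) * (μp ^ k - μm ^ k) * hA
  exact mul_left_cancel₀ (mul_ne_zero hρ' hμμ) G
end

section
/- Let M ≥ 1 be an integer, ρ a nonzero real number, κ = (1−ρ)/ρ, and γ ∈ ℂ. Let μ₊, μ₋ ∈ ℂ be the two roots of ρx² − γx + (1−ρ) = 0, and assume μ₊^{2M} ≠ μ₋^{2M}. Set N = 2M − 1 (so N is odd and M = (N+1)/2). If a₀, a₁, …, a_{N+1} are complex numbers satisfying (1−ρ)·a_{k−1} − γ·a_k + ρ·a_{k+1} = 0 for all k = 1,…,N, with a₀ = a_{N+1} = 1, then μ₊^M + μ₋^M ≠ 0 and a_M = (κ^M + 1)/(μ₊^M + μ₋^M). -/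
theorem stmt_10 (M : ℕ) (hM : 1 ≤ M) (ρ : ℝ) (hρ : ρ ≠ 0) (γ : ℂ) (μp μm : ℂ)
    (hroots : ∀ x : ℂ, (ρ : ℂ) * x ^ 2 - γ * x + (1 - (ρ : ℂ))
      = (ρ : ℂ) * (x - μp) * (x - μm))
    (hne : μp ^ (2 * M) ≠ μm ^ (2 * M))
    (a : ℕ → ℂ)
    (hrec : ∀ k : ℕ, 1 ≤ k → k ≤ 2 * M - 1 →
      (1 - (ρ : ℂ)) * a (k - 1) - γ * a k + (ρ : ℂ) * a (k + 1) = 0)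
    (h0 : a 0 = 1) (hN1 : a (2 * M) = 1) :
    μp ^ M + μm ^ M ≠ 0 ∧
      a M = ((((1 - ρ) / ρ : ℝ) : ℂ) ^ M + 1) / (μp ^ M + μm ^ M) := by
  have hρ' : (ρ : ℂ) ≠ 0 := by exact_mod_cast hρ
  set s : ℂ := μp + μm with hs
  set p : ℂ := μp * μm with hp
  -- coefficient identification
  have h1 : (1 : ℂ) - ρ = ρ * p := by
    have := hroots 0
    rw [hp]; linear_combination this
  have h2 : γ = ρ * s := by
    have := hroots 1
    rw [hs]; linear_combination h1 - this
  -- root equations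
  have hμp : μp ^ 2 = s * μp - p := by
    have := hroots μp
    have h' : (ρ:ℂ) * (μp ^ 2 - s * μp + p) = 0 := by
      linear_combination this - h1 + μp * h2
    rcases mul_eq_zero.1 h' with h | h
    · exact absurd h hρ'
    · linear_combination h
  have hμm : μm ^ 2 = s * μm - p := by
    have := hroots μm
    have h' : (ρ:ℂ) * (μm ^ 2 - s * μm + p) = 0 := by
      linear_combination this - h1 + μm * h2
    rcases mul_eq_zero.1 h' with h | h
    · exact absurd h hρ'
    · linear_combination h
  -- simplified recurrence
  have hrec' : ∀ n : ℕ, n + 2 ≤ 2 * M → a (n + 2) = s * a (n + 1) - p * a n := by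
    intro n hn
    have h := hrec (n + 1) (by omega) (by omega)
    simp only [Nat.add_sub_cancel] at h
    have h' : (ρ:ℂ) * (a (n + 2) - (s * a (n + 1) - p * a n)) = 0 := by
      linear_combination h - a n * h1 + a (n+1) * h2
    rcases mul_eq_zero.1 h' with h'' | h''
    · exact absurd h'' hρ'
    · linear_combination h''
  -- closed form
  have claim : ∀ k, k ≤ 2 * M →
      (μp - μm) * a k = (a 1 - μm) * μp ^ k - (a 1 - μp) * μm ^ k := by
    intro k
    induction k using Nat.strong_induction_on with
    | _ k ih =>
      match k with
      | 0 => intro _; rw [h0]; ring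
      | 1 => intro _; ring
      | (n + 2) =>
        intro hk
        have ihn := ih n (by omega) (by omega)
        have ihn1 := ih (n + 1) (by omega) (by omega)
        have hr := hrec' n hk
        have hpp : μp ^ (n + 2) = s * μp ^ (n + 1) - p * μp ^ n := by
          have : μp ^ (n + 2) = μp ^ n * μp ^ 2 := by ring
          rw [this, hμp]; ring
        have hmm : μm ^ (n + 2) = s * μm ^ (n + 1) - p * μm ^ n := by
          have : μm ^ (n + 2) = μm ^ n * μm ^ 2 := by ring
          rw [this, hμm]; ring
        rw [hr, hpp, hmm]
        linear_combination s * ihn1 - p * ihn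
  -- abbreviations
  set X : ℂ := μp ^ M with hX
  set Y : ℂ := μm ^ M with hY
  have hX2 : μp ^ (2 * M) = X ^ 2 := by rw [hX, ← pow_mul, Nat.mul_comm]
  have hY2 : μm ^ (2 * M) = Y ^ 2 := by rw [hY, ← pow_mul, Nat.mul_comm]
  have hXYne : X ^ 2 - Y ^ 2 ≠ 0 := by
    intro h; apply hne; rw [hX2, hY2]; linear_combination h
  have hsum : X + Y ≠ 0 := by
    intro h; apply hXYne; linear_combination (X - Y) * h
  have hdiffXY : X - Y ≠ 0 := by
    intro h; apply hXYne; linear_combination (X + Y) * h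
  have hd : μp - μm ≠ 0 := by
    intro h
    apply hne
    have : μp = μm := by linear_combination h
    rw [this]
  have hE1 := claim (2 * M) le_rfl
  rw [hN1, hX2, hY2, mul_one] at hE1
  have hE2 := claim M (by omega)
  rw [← hX, ← hY] at hE2
  -- key identity
  have key : a M * (X + Y) = 1 + p ^ M := by
    have hk : (μp - μm) * (X - Y) * (a M * (X + Y)) =
        (μp - μm) * (X - Y) * (1 + X * Y) := by
      linear_combination (X ^ 2 - Y ^ 2) * hE2 + (Y - X) * hE1
    have := mul_left_cancel₀ (mul_ne_zero hd hdiffXY) hk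
    rw [this, hp, hX, hY, ← mul_pow]
  refine ⟨hsum, ?_⟩
  have hκ : (((1 - ρ) / ρ : ℝ) : ℂ) = p := by
    push_cast
    field_simp
    linear_combination h1
  rw [hκ, eq_div_iff hsum]
  linear_combination key
end

section
/- Let ρ ∈ (0,1) with ρ ≠ 1/2 and let f, g be negative real numbers. Set κ = (1−ρ)/ρ and, for ω > 0, γ(ω) = (f + iωg + ω²)/(f + iωg); let μ₊(ω), μ₋(ω) be the two roots of ρx² − γ(ω)x + (1−ρ) = 0. Then there exist ω > 0, c > 1 and M₀ such that for all integers M ≥ M₀ one has μ₊(ω)^M + μ₋(ω)^M ≠ 0 and |(κ^M + 1)/(μ₊(ω)^M + μ₋(ω)^M)| ≥ c^M. (This is the harmonic instability half of the theorem that the ring-road flock is harmonically stable if and only if ρ = 1/2 with f and g negative: for ρ ≠ 1/2 the supremum over ω of the frequency response of the middle agent grows exponentially in the flock size.) -/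
/-- `γ(ω) = (f + iωg + ω²)/(f + iωg)`. -/
noncomputable def gam (f g ω : ℝ) : ℂ :=
  ((f : ℂ) + Complex.I * ω * g + (ω : ℂ) ^ 2) / ((f : ℂ) + Complex.I * ω * g)

/-!
The roots satisfy `μ₊ μ₋ = κ` and `μ₊ + μ₋ = (1 + κ) γ`; at `γ = 1` they are `1` and `κ`, and
`κ ^ M + 1 ≥ L ^ M` with `L = max 1 κ`. The Joukowski map `μ ↦ μ + κ / μ` sends the circle
`‖μ‖ = L` onto the ellipse with semi-axes `1 + κ` and `|1 - κ|`, so both roots have modulus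
`< L` as soon as `(1 - κ)² (Re γ)² + (1 + κ)² (Im γ)² < (1 - κ)²`, and distinct moduli as soon as
`γ` is not real. Now `γ(ω) = 1 + ω² / (f + iωg)` enters that ellipse for small `ω > 0`: its real
part drops by about `ω² / |f|` while its imaginary part is only of order `ω³`. Then
`‖μ₊ ^ M + μ₋ ^ M‖ ≤ 2 m ^ M` with `m < L`, which gives the exponential growth.
-/

open Filter Topology ComplexConjugate

section PowerSums

variable {𝕜 : Type*} [NormedDivisionRing 𝕜] [CharZero 𝕜]

lemma pow_add_pow_ne_zero_of_norm_ne {a b : 𝕜} (hab : ‖a‖ ≠ ‖b‖) (M : ℕ) :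
    a ^ M + b ^ M ≠ 0 := by
  intro h
  rcases M.eq_zero_or_pos with rfl | hM
  · norm_num at h
  apply hab
  have hpow : ‖a‖ ^ M = ‖b‖ ^ M := by
    rw [← norm_pow, ← norm_pow, eq_neg_of_add_eq_zero_left h, norm_neg]
  exact (pow_left_inj₀ (norm_nonneg _) (norm_nonneg _) hM.ne').1 hpow

lemma exists_pow_le_norm_div_pow_add_pow {a b : 𝕜} {L : ℝ} (hab : ‖a‖ ≠ ‖b‖)
    (ha : ‖a‖ < L) (hb : ‖b‖ < L) (z : ℕ → 𝕜) (hz : ∀ M, L ^ M ≤ ‖z M‖) :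
    ∃ c : ℝ, 1 < c ∧ ∃ M₀ : ℕ, ∀ M : ℕ, M₀ ≤ M →
      a ^ M + b ^ M ≠ 0 ∧ c ^ M ≤ ‖z M / (a ^ M + b ^ M)‖ := by
  set m := max ‖a‖ ‖b‖
  have hm : 0 < m := by
    rcases hab.lt_or_gt with h | h
    · exact (norm_nonneg a).trans_lt (h.trans_le (le_max_right _ _))
    · exact (norm_nonneg b).trans_lt (h.trans_le (le_max_left _ _))
  have hmL : m < L := max_lt ha hb
  set c := Real.sqrt (L / m)
  have hc : 1 < c := Real.lt_sqrt_of_sq_lt (by rw [one_pow, one_lt_div hm]; exact hmL)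
  have hc2 : c ^ 2 = L / m := Real.sq_sqrt (div_pos (hm.trans hmL) hm).le
  obtain ⟨M₀, hM₀⟩ := eventually_atTop.1 <|
    (tendsto_pow_atTop_atTop_of_one_lt hc).eventually_ge_atTop 2
  refine ⟨c, hc, M₀, fun M hM => ⟨pow_add_pow_ne_zero_of_norm_ne hab M, ?_⟩⟩
  have hden : ‖a ^ M + b ^ M‖ ≤ 2 * m ^ M := by
    have h₁ : ‖a‖ ^ M ≤ m ^ M := pow_le_pow_left₀ (norm_nonneg _) (le_max_left _ _) M
    have h₂ : ‖b‖ ^ M ≤ m ^ M := pow_le_pow_left₀ (norm_nonneg _) (le_max_right _ _) M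
    calc ‖a ^ M + b ^ M‖ ≤ ‖a‖ ^ M + ‖b‖ ^ M := by
          rw [← norm_pow, ← norm_pow]; exact norm_add_le _ _
      _ ≤ 2 * m ^ M := by linarith
  rw [norm_div, le_div_iff₀ (norm_pos_iff.2 (pow_add_pow_ne_zero_of_norm_ne hab M))]
  calc c ^ M * ‖a ^ M + b ^ M‖ ≤ c ^ M * (c ^ M * m ^ M) := by
        gcongr; exact hden.trans (by gcongr; exact hM₀ M hM)
    _ = L ^ M := by
        rw [← mul_assoc, ← mul_pow, ← mul_pow, ← sq, hc2, div_mul_cancel₀ _ hm.ne']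
    _ ≤ ‖z M‖ := hz M

end PowerSums

lemma add_eq_and_mul_eq_of_forall_eq {a b c μ ν : ℂ} (ha : a ≠ 0)
    (h : ∀ x, a * x ^ 2 - b * x + c = a * (x - μ) * (x - ν)) :
    μ + ν = b / a ∧ μ * ν = c / a := by
  have h₀ := h 0
  have h₁ := h 1
  exact ⟨(eq_div_iff ha).2 (by linear_combination h₁ - h₀),
    (eq_div_iff ha).2 (by linear_combination -h₀)⟩

lemma norm_lt_max_of_mem_ellipse {κ : ℝ} (hκ : 0 ≤ κ) {γ μ ν : ℂ}
    (hsum : μ + ν = (1 + κ) * γ) (hprod : μ * ν = κ)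
    (hγ : (1 - κ) ^ 2 * γ.re ^ 2 + (1 + κ) ^ 2 * γ.im ^ 2 < (1 - κ) ^ 2) :
    ‖μ‖ < max 1 κ := by
  by_contra! hμ
  set n := Complex.normSq μ with hn
  have hn1 : 1 ≤ n := by
    rw [hn, Complex.normSq_eq_norm_sq]; nlinarith [le_max_left 1 κ]
  have hnκ : κ ^ 2 ≤ n := by
    rw [hn, Complex.normSq_eq_norm_sq]; nlinarith [le_max_right 1 κ]
  have hν : (n : ℂ) * ν = κ * conj μ := by
    rw [hn, ← Complex.mul_conj]; linear_combination conj μ * hprod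
  have key : (n : ℂ) * ((1 + κ) * γ) = n * μ + κ * conj μ := by rw [← hsum, ← hν]; ring
  have hre := congrArg Complex.re key
  have him := congrArg Complex.im key
  simp only [Complex.mul_re, Complex.mul_im, Complex.add_re, Complex.add_im, Complex.ofReal_re,
    Complex.ofReal_im, Complex.one_re, Complex.one_im, Complex.conj_re, Complex.conj_im] at hre him
  have hA : (1 + κ) * n * γ.re = μ.re * (n + κ) := by linear_combination hre
  have hB : (1 + κ) * n * γ.im = μ.im * (n - κ) := by linear_combination him
  have hnab : n = μ.re ^ 2 + μ.im ^ 2 := by rw [hn, Complex.normSq_apply]; ring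
  -- `(n + κ) ^ 2 - (1 + κ) ^ 2 n = (n - κ) ^ 2 - (1 - κ) ^ 2 n = (n - 1) (n - κ ^ 2) ≥ 0`
  have hout : (1 - κ) ^ 2 * ((1 + κ) * n) ^ 2 ≤
      (1 - κ) ^ 2 * (μ.re * (n + κ)) ^ 2 + (1 + κ) ^ 2 * (μ.im * (n - κ)) ^ 2 := by
    have hgap : 0 ≤ ((1 - κ) ^ 2 * μ.re ^ 2 + (1 + κ) ^ 2 * μ.im ^ 2) * ((n - 1) * (n - κ ^ 2)) :=
      mul_nonneg (by positivity) (mul_nonneg (by linarith) (by linarith))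
    linear_combination hgap + (1 - κ) ^ 2 * (1 + κ) ^ 2 * n * hnab
  have hin := mul_lt_mul_of_pos_left hγ (by positivity : 0 < ((1 + κ) * n) ^ 2)
  rw [← hA, ← hB] at hout
  linarith [hout, hin]

lemma norm_ne_norm_of_mul_eq_of_im_ne_zero {κ : ℝ} (hκ : 0 ≤ κ) {μ ν : ℂ}
    (hprod : μ * ν = κ) (him : (μ + ν).im ≠ 0) : ‖μ‖ ≠ ‖ν‖ := by
  intro h
  apply him
  have hsq : ‖μ‖ ^ 2 = κ := by
    rw [sq]
    nth_rewrite 2 [h]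
    rw [← norm_mul, hprod, Complex.norm_real, Real.norm_of_nonneg hκ]
  rcases eq_or_ne μ 0 with rfl | hμ
  · rw [norm_zero, eq_comm, norm_eq_zero] at h
    simp [h]
  have hν : ν = conj μ := by
    refine mul_left_cancel₀ hμ ?_
    rw [hprod, Complex.mul_conj, Complex.normSq_eq_norm_sq, hsq]
  simp [hν]

lemma max_one_pow_le_pow_add_one {κ : ℝ} (hκ : 0 ≤ κ) (M : ℕ) : max 1 κ ^ M ≤ κ ^ M + 1 := by
  rcases le_total 1 κ with h | h
  · rw [max_eq_right h]; linarith
  · rw [max_eq_left h, one_pow]; linarith [pow_nonneg hκ M]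

lemma gam_re {f g ω : ℝ} (h : f ^ 2 + (ω * g) ^ 2 ≠ 0) :
    (gam f g ω).re = 1 + ω ^ 2 * f / (f ^ 2 + (ω * g) ^ 2) := by
  rw [mul_pow] at h ⊢
  simp only [gam, sq, Complex.div_re, Complex.add_re, Complex.ofReal_re, Complex.mul_re,
    Complex.I_re, zero_mul, Complex.I_im, Complex.ofReal_im, mul_zero, sub_self, Complex.mul_im,
    one_mul, zero_add, add_zero, sub_zero, Complex.normSq_apply, Complex.add_im]
  field_simp
  ring

lemma gam_im (f g ω : ℝ) : (gam f g ω).im = -(ω ^ 3 * g) / (f ^ 2 + (ω * g) ^ 2) := by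
  simp only [gam, sq, Complex.div_im, Complex.add_im, Complex.ofReal_im, Complex.mul_im,
    Complex.mul_re, Complex.I_re, Complex.ofReal_re, zero_mul, Complex.I_im, mul_zero, sub_self,
    one_mul, zero_add, add_zero, Complex.add_re, Complex.normSq_apply, sub_zero]
  field_simp
  ring

lemma exists_pos_gam_mem_ellipse {f g : ℝ} (hf : f < 0) (hg : g ≠ 0) {a : ℝ} (ha : 0 < a)
    (b : ℝ) :
    ∃ ω : ℝ, 0 < ω ∧ a * (gam f g ω).re ^ 2 + b * (gam f g ω).im ^ 2 < a ∧
      (gam f g ω).im ≠ 0 := by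
  -- the ellipse condition divided by `ω ^ 2`, which holds at `ω = 0`
  have hnear : ∀ᶠ ω in 𝓝 (0 : ℝ),
      b * ω ^ 4 * g ^ 2 < a * (-f) * (2 * (f ^ 2 + (ω * g) ^ 2) + ω ^ 2 * f) := by
    refine ContinuousAt.eventually_lt (by fun_prop) (by fun_prop) ?_
    have : 0 < a * (-f) * (2 * f ^ 2) :=
      mul_pos (mul_pos ha (neg_pos.2 hf)) (mul_pos two_pos (sq_pos_of_neg hf))
    simpa using this
  obtain ⟨ω, hω, hω0⟩ := ((hnear.filter_mono nhdsWithin_le_nhds).and self_mem_nhdsWithin).exists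
    (f := 𝓝[>] (0 : ℝ))
  have hN : 0 < f ^ 2 + (ω * g) ^ 2 := add_pos_of_pos_of_nonneg (sq_pos_of_neg hf) (sq_nonneg _)
  refine ⟨ω, hω0, ?_, ?_⟩
  · rw [gam_re hN.ne', gam_im]
    set N := f ^ 2 + (ω * g) ^ 2
    have hid : a * (1 + ω ^ 2 * f / N) ^ 2 + b * (-(ω ^ 3 * g) / N) ^ 2 =
        a - ω ^ 2 * (a * (-f) * (2 * N + ω ^ 2 * f) - b * ω ^ 4 * g ^ 2) / N ^ 2 := by
      field_simp
      ring
    rw [hid]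
    exact sub_lt_self _ (div_pos (mul_pos (pow_pos hω0 2) (sub_pos.2 hω)) (pow_pos hN 2))
  · rw [gam_im]
    exact div_ne_zero (neg_ne_zero.2 (mul_ne_zero (pow_ne_zero _ hω0.ne') hg)) hN.ne'

theorem stmt_14 (ρ : ℝ) (hρ : ρ ∈ Set.Ioo (0 : ℝ) 1) (hρ' : ρ ≠ 1 / 2)
    (f g : ℝ) (hf : f < 0) (hg : g < 0) :
    ∃ ω : ℝ, 0 < ω ∧
      ∀ μp μm : ℂ,
        (∀ x : ℂ, (ρ : ℂ) * x ^ 2 - gam f g ω * x + (1 - (ρ : ℂ))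
            = (ρ : ℂ) * (x - μp) * (x - μm)) →
        ∃ c : ℝ, 1 < c ∧ ∃ M₀ : ℕ, ∀ M : ℕ, M₀ ≤ M →
          μp ^ M + μm ^ M ≠ 0 ∧
          c ^ M ≤ ‖
            (((((1 - ρ) / ρ : ℝ) : ℂ) ^ M + 1) / (μp ^ M + μm ^ M))‖ := by
  obtain ⟨hρ0, hρ1⟩ := hρ
  set κ : ℝ := (1 - ρ) / ρ with hκ
  have hκ0 : 0 < κ := div_pos (by linarith) hρ0
  have hκ1 : κ ≠ 1 := by
    rw [hκ, ne_eq, div_eq_one_iff_eq hρ0.ne']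
    exact fun h => hρ' (by linarith)
  obtain ⟨ω, hω0, hell, him⟩ := exists_pos_gam_mem_ellipse hf hg.ne
    (pow_two_pos_of_ne_zero (sub_ne_zero.2 hκ1.symm)) ((1 + κ) ^ 2)
  refine ⟨ω, hω0, fun μp μm hfac => ?_⟩
  have hρC : (ρ : ℂ) ≠ 0 := by exact_mod_cast hρ0.ne'
  obtain ⟨hsum, hprod⟩ := add_eq_and_mul_eq_of_forall_eq hρC hfac
  have hsum' : μp + μm = (1 + κ) * gam f g ω := by
    rw [hsum, hκ]; push_cast; field_simp; ring
  have hprod' : μp * μm = κ := by rw [hprod, hκ]; norm_cast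
  refine exists_pow_le_norm_div_pow_add_pow ?_
    (norm_lt_max_of_mem_ellipse hκ0.le hsum' hprod' hell)
    (norm_lt_max_of_mem_ellipse hκ0.le (by rwa [add_comm]) (by rwa [mul_comm]) hell)
    (fun M => (κ : ℂ) ^ M + 1) (fun M => ?_)
  · refine norm_ne_norm_of_mul_eq_of_im_ne_zero hκ0.le hprod' ?_
    rw [hsum']; simpa using ⟨by positivity, him⟩
  · rw [← Complex.ofReal_pow, ← Complex.ofReal_one, ← Complex.ofReal_add, Complex.norm_real,
      Real.norm_of_nonneg (by positivity)]
    exact max_one_pow_le_pow_add_one hκ0.le M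
end

section
/- Let ρ be a real number with ρ ∉ [0,1] (so ρ(1−ρ) < 0), let f, g be negative real numbers, and let ω > 0. If the two roots μ₊, μ₋ of the quadratic ρx² − γ(ω)x + (1−ρ) = 0 satisfy |μ₊| = |μ₋|, then f + g² < 0 and ω² = f²/(−f−g²), and moreover 4|ρ(1−ρ)| ≥ −g²/(f+g²). -/
open Complex ComplexConjugate

theorem vieta_of_forall_eq {R : Type*} [CommRing R] {a b c p q : R}
    (h : ∀ x, a * x ^ 2 - b * x + c = a * (x - p) * (x - q)) :
    a * (p + q) = b ∧ a * (p * q) = c := by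
  have h0 := h 0
  have h1 := h 1
  constructor
  · linear_combination h1 - h0
  · linear_combination -h0

namespace Complex

theorem normSq_eq_abs_of_mul_eq_ofReal {p q : ℂ} {c : ℝ} (hpq : p * q = c) (h : ‖p‖ = ‖q‖) :
    normSq p = |c| := by
  rw [← Complex.sq_norm, sq]
  nth_rw 2 [h]
  rw [← norm_mul, hpq, norm_real, Real.norm_eq_abs]

theorem add_eq_two_im_mul_I_of_mul_eq_ofReal {p q : ℂ} {c : ℝ} (hc : c < 0) (hpq : p * q = c)
    (h : ‖p‖ = ‖q‖) : p + q = (2 * p.im : ℝ) * I := by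
  have hnorm := normSq_eq_abs_of_mul_eq_ofReal hpq h
  have hp : p ≠ 0 := by
    rintro rfl
    rw [map_zero] at hnorm
    exact (abs_pos.mpr hc.ne).ne hnorm
  have hconj : conj p = -q := by
    refine mul_left_cancel₀ hp ?_
    rw [mul_conj, hnorm, abs_of_neg hc, mul_neg, hpq, ofReal_neg]
  rw [← sub_conj, hconj, sub_neg_eq_add]

end Complex

theorem gam_eq_ofReal_mul_I {f g ω t : ℝ} (hf : f ≠ 0) (h : gam f g ω = t * I) :
    t * f = ω * g ∧ t * (ω * g) = -(f + ω ^ 2) := by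
  have hden : (f : ℂ) + I * ω * g ≠ 0 := fun h0 => hf (by simpa using congrArg re h0)
  rw [gam, div_eq_iff hden] at h
  have hre := congrArg re h
  have him := congrArg im h
  simp only [add_re, add_im, mul_re, mul_im, ofReal_re, ofReal_im, I_re, I_im, ← ofReal_pow]
    at hre him
  constructor <;> linarith

theorem sq_mul_add_sq_eq_of_mul_eq {f g ω t : ℝ} (hf : f ≠ 0) (h₁ : t * f = ω * g)
    (h₂ : t * (ω * g) = -(f + ω ^ 2)) :
    ω ^ 2 * (f + g ^ 2) = -f ^ 2 ∧ t ^ 2 * (f + g ^ 2) = -g ^ 2 := by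
  have hω : ω ^ 2 * (f + g ^ 2) = -f ^ 2 := by linear_combination f * h₂ - ω * g * h₁
  refine ⟨hω, mul_left_cancel₀ (pow_ne_zero 2 hf) ?_⟩
  linear_combination (f + g ^ 2) * (t * f + ω * g) * h₁ + g ^ 2 * hω

theorem stmt_16_general (ρ : ℝ) (hρ : ρ ∉ Set.Icc (0 : ℝ) 1) (f g : ℝ)
    (hf : f < 0) (ω : ℝ) (μp μm : ℂ)
    (hroots : ∀ x : ℂ, (ρ : ℂ) * x ^ 2 - gam f g ω * x + (1 - (ρ : ℂ))
      = (ρ : ℂ) * (x - μp) * (x - μm))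
    (habs : ‖μp‖ = ‖μm‖) :
    f + g ^ 2 < 0 ∧ ω ^ 2 = f ^ 2 / (-f - g ^ 2) ∧
      4 * |ρ * (1 - ρ)| ≥ -g ^ 2 / (f + g ^ 2) := by
  have hc : ρ * (1 - ρ) < 0 := by
    rw [Set.mem_Icc, not_and_or, not_le, not_le] at hρ
    rcases hρ with h | h <;> nlinarith
  obtain ⟨hsum, hprod⟩ := vieta_of_forall_eq hroots
  have huv : (ρ * μp) * (ρ * μm) = (ρ * (1 - ρ) : ℝ) := by
    push_cast; linear_combination (ρ : ℂ) * hprod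
  have hnorm : ‖(ρ : ℂ) * μp‖ = ‖(ρ : ℂ) * μm‖ := by rw [norm_mul, norm_mul, habs]
  set u := (ρ : ℂ) * μp
  have hγ : gam f g ω = (2 * u.im : ℝ) * I := by
    rw [← hsum, mul_add, Complex.add_eq_two_im_mul_I_of_mul_eq_ofReal hc huv hnorm]
  obtain ⟨h₁, h₂⟩ := gam_eq_ofReal_mul_I hf.ne hγ
  obtain ⟨hω, ht⟩ := sq_mul_add_sq_eq_of_mul_eq hf.ne h₁ h₂
  have hfg : f + g ^ 2 < 0 := by
    by_contra! h
    nlinarith [mul_nonneg (sq_nonneg ω) h, mul_pos_of_neg_of_neg hf hf]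
  refine ⟨hfg, by rw [eq_div_iff (by linarith)]; linarith, ?_⟩
  rw [← eq_div_iff hfg.ne] at ht
  rw [← ht, ← Complex.normSq_eq_abs_of_mul_eq_ofReal huv hnorm]
  nlinarith [Complex.im_sq_le_normSq u]

theorem stmt_16 (ρ : ℝ) (hρ : ρ ∉ Set.Icc (0 : ℝ) 1) (f g : ℝ)
    (hf : f < 0) (hg : g < 0) (ω : ℝ) (hω : 0 < ω) (μp μm : ℂ)
    (hroots : ∀ x : ℂ, (ρ : ℂ) * x ^ 2 - gam f g ω * x + (1 - (ρ : ℂ))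
      = (ρ : ℂ) * (x - μp) * (x - μm))
    (habs : ‖μp‖ = ‖μm‖) :
    f + g ^ 2 < 0 ∧ ω ^ 2 = f ^ 2 / (-f - g ^ 2) ∧
      4 * |ρ * (1 - ρ)| ≥ -g ^ 2 / (f + g ^ 2) :=
  stmt_16_general ρ hρ f g hf ω μp μm hroots habs
end

section
/- Let ρ be a real number with ρ ∉ [0,1], and let f, g be negative real numbers such that either f + g² ≥ 0 or 4|ρ(1−ρ)| < −g²/(f+g²). Then for every ω > 0 the two roots μ₊, μ₋ of the quadratic ρx² − γ(ω)x + (1−ρ) = 0 have distinct absolute values: |μ₊| ≠ |μ₋|. -/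
theorem Complex.exists_add_sq_eq_mul_of_norm_eq {μ ν : ℂ} (h : ‖μ‖ = ‖ν‖) :
    ∃ t : ℝ, 0 ≤ t ∧ t ≤ 4 ∧ (μ + ν) ^ 2 = t * (μ * ν) := by
  by_cases hν : ν = 0
  · obtain rfl : μ = 0 := by simpa [hν] using h
    exact ⟨0, le_rfl, by norm_num, by simp [hν]⟩
  have hν' : (‖ν‖ : ℂ) ^ 2 ≠ 0 := by simpa using hν
  refine ⟨‖μ + ν‖ ^ 2 / ‖ν‖ ^ 2, by positivity, ?_, ?_⟩
  · rw [div_le_iff₀ (by positivity)]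
    nlinarith [norm_add_le μ ν, norm_nonneg (μ + ν)]
  · -- `‖μ + ν‖² μ ν = (μ + ν)(‖μ‖² ν + ‖ν‖² μ)` after expanding `‖μ + ν‖² = (μ + ν)(μ̄ + ν̄)`
    have hμ := mul_conj' μ
    have hν := mul_conj' ν
    have hμν := mul_conj' (μ + ν)
    rw [map_add] at hμν
    rw [h] at hμ
    rw [Complex.ofReal_div, div_mul_eq_mul_div, eq_div_iff (by exact_mod_cast hν')]
    push_cast
    linear_combination μ * ν * hμν - (μ + ν) * ν * hμ - (μ + ν) * μ * hν

theorem mul_add_sq_eq_sq_of_gam_sq_eq_ofReal {f g ω k : ℝ} (hf : f ≠ 0) (hg : g ≠ 0)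
    (hω : ω ≠ 0) (hk : gam f g ω ^ 2 = k) : k * (f + g ^ 2) = g ^ 2 := by
  have hz : (f : ℂ) + Complex.I * ω * g ≠ 0 := fun h ↦ hf (by simpa using congrArg Complex.re h)
  have hsq : ((f : ℂ) + Complex.I * ω * g + (ω : ℂ) ^ 2) ^ 2
      = k * ((f : ℂ) + Complex.I * ω * g) ^ 2 := by
    rw [← hk, gam, div_pow, div_mul_cancel₀ _ (pow_ne_zero 2 hz)]
  have hre := congrArg Complex.re hsq
  have him := congrArg Complex.im hsq
  simp only [sq, Complex.add_re, Complex.add_im, Complex.mul_re, Complex.mul_im,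
    Complex.ofReal_re, Complex.ofReal_im, Complex.I_re, Complex.I_im] at hre him
  have him' : f + ω ^ 2 = k * f := by
    apply mul_right_cancel₀ (mul_ne_zero hω hg)
    linear_combination him / 2
  have hk1 : k ≠ 1 := by
    rintro rfl
    exact hω (pow_eq_zero_iff two_ne_zero |>.mp (by linarith))
  -- the real part, after eliminating `ω²`, factors as `(k - 1)(k f² + ω² g²) = 0`
  have hkf : k * f ^ 2 + ω ^ 2 * g ^ 2 = 0 := by
    refine (mul_eq_zero.mp ?_).resolve_left (sub_ne_zero.mpr hk1)
    linear_combination hre - (f + ω ^ 2 + k * f) * him'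
  have : f * (k * f + (k - 1) * g ^ 2) = 0 := by linear_combination hkf - g ^ 2 * him'
  linear_combination (mul_eq_zero.mp this).resolve_left hf

theorem stmt_17 (ρ : ℝ) (hρ : ρ ∉ Set.Icc (0 : ℝ) 1) (f g : ℝ)
    (hf : f < 0) (hg : g < 0)
    (hcond : f + g ^ 2 ≥ 0 ∨ 4 * |ρ * (1 - ρ)| < -g ^ 2 / (f + g ^ 2)) :
    ∀ ω : ℝ, 0 < ω → ∀ μp μm : ℂ,
      (∀ x : ℂ, (ρ : ℂ) * x ^ 2 - gam f g ω * x + (1 - (ρ : ℂ))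
        = (ρ : ℂ) * (x - μp) * (x - μm)) →
      ‖μp‖ ≠ ‖μm‖ := by
  intro ω hω μp μm hroots hnorm
  have hρ : ρ * (1 - ρ) < 0 := by
    rw [Set.mem_Icc, not_and_or, not_le, not_le] at hρ
    rcases hρ with hρ | hρ <;> nlinarith
  obtain ⟨t, ht0, ht4, ht⟩ := Complex.exists_add_sq_eq_mul_of_norm_eq hnorm
  have hγ : gam f g ω ^ 2 = ((ρ * (1 - ρ) * t : ℝ) : ℂ) := by
    have hsum : gam f g ω = ρ * (μp + μm) := by linear_combination hroots 0 - hroots 1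
    have hprod : 1 - (ρ : ℂ) = ρ * (μp * μm) := by linear_combination hroots 0
    rw [hsum, mul_pow, ht]
    push_cast
    linear_combination -(ρ : ℂ) * t * hprod
  have hk := mul_add_sq_eq_sq_of_gam_sq_eq_ofReal hf.ne hg.ne hω.ne' hγ
  have hg2 : 0 < g ^ 2 := sq_pos_of_neg hg
  have hfg : f + g ^ 2 < 0 := by
    by_contra! h
    nlinarith [mul_nonpos_of_nonpos_of_nonneg (mul_nonpos_of_nonpos_of_nonneg hρ.le ht0) h]
  rcases hcond with h | h
  · exact absurd h (not_le.mpr hfg)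
  · rw [abs_of_neg hρ, lt_div_iff_of_neg hfg, ← hk] at h
    nlinarith [mul_pos_of_neg_of_neg hρ hfg]
end
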